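/- Let p be prime, n a positive integer, and R2 = Z_p[u]/(u^2). Suppose C = <g(x) + u·p(x), u·a(x)> is a cyclic code of length n over R2 where g(x), a(x) ∈ Z_p[x] are monic with deg g = r, deg a = t, t ≤ r, a(x) | g(x) | (x^n - 1) mod p, and a(x) divides p(x)·(x^n-1)/g(x) mod p. Then the set B = {x^i(g(x) + u·p(x)) : 0 ≤ i ≤ n-r-1} ∪ {x^j·u·a(x) : 0 ≤ j ≤ r-t-1} is a minimal spanning set for C as an R2-module, and |C| = p^{2n - r - t}. -/

import Mathlib

/-!
Put `G = g + u p(x)`, `h = (x^n - 1) / g`, `b = g / a` and `s = p(x) h / a`; in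
`R_2[x]/(x^n - 1)` we have `u^2 = 0` and `g h = 0`, hence `h G = u p(x) h = s (u a)`. Dividing by the monic
polynomials `h` and `b` therefore puts every codeword in the form `A G + E (u G) + D (u a)` with
`deg A, deg E < n - r` and `deg D < r - t`, a `Z_p`-combination of the elements of the spanning
set and their multiples by `u`. Such an expression vanishes only for `A = E = D = 0`: multiplying
by `u` gives `x^n - 1 ∣ A g`, so `h ∣ A`; then `x^n - 1 ∣ (b E + D) a` gives `b ∣ D` and
`h ∣ E`, and the degree bounds force zero. Hence the code is in bijection with
`Z_p^{(n-r)+(n-r)+(r-t)}`, which gives both the minimality of the spanning set and the size.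
-/

open Polynomial

set_option synthInstance.maxHeartbeats 1000000
set_option maxHeartbeats 1000000

noncomputable section

/-- `Ru p k` is the ring `R_k = Z_p[u]/(u^k)`. -/
abbrev Ru (p k : ℕ) : Type := Polynomial (ZMod p) ⧸ Ideal.span {(X : Polynomial (ZMod p)) ^ k}

/-- The element `u` of `Ru p k`. -/
abbrev uR (p k : ℕ) : Ru p k := Ideal.Quotient.mk _ (X : Polynomial (ZMod p))

instance (p k n : ℕ) : (Ideal.span {(X : Polynomial (Ru p k)) ^ n - 1}).IsTwoSided :=
  ⟨fun b ha ↦ mul_comm b _ ▸ Ideal.mul_mem_left _ b ha⟩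

/-- `Rn p k n` is the ring `R_k[x]/(x^n - 1)`; its ideals are the cyclic codes of length `n`. -/
abbrev Rn (p k n : ℕ) : Type :=
  Polynomial (Ru p k) ⧸ Ideal.span {(X : Polynomial (Ru p k)) ^ n - 1}

/-- The natural ring map `Z_p[x] → R_k[x]/(x^n - 1)`. -/
abbrev liftP (p k n : ℕ) : Polynomial (ZMod p) →+* Rn p k n :=
  (Ideal.Quotient.mk _).comp (mapRingHom (algebraMap (ZMod p) (Ru p k)))

/-- `u` as an element of `R_k[x]/(x^n - 1)`. -/
abbrev uu (p k n : ℕ) : Rn p k n := Ideal.Quotient.mk _ (C (uR p k))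

/-- `x` as an element of `R_k[x]/(x^n - 1)`. -/
abbrev xx (p k n : ℕ) : Rn p k n := Ideal.Quotient.mk _ (X : Polynomial (Ru p k))

section

/-- Instance search does not find commutativity of `Rn p k n`: the polynomial ring over `Ru p k`
only carries the semiring structure of the quotient. The instance stays local to this section, so
that the final statement elaborates with the instances it was written with. -/
abbrev Rn.commRing (p k n : ℕ) : CommRing (Rn p k n) :=
  { (inferInstance : Ring (Rn p k n)) with
    mul_comm := fun a b => by
      obtain ⟨a, rfl⟩ := Ideal.Quotient.mk_surjective a
      obtain ⟨b, rfl⟩ := Ideal.Quotient.mk_surjective b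
      rw [← map_mul, ← map_mul]
      exact congrArg _ (mul_comm a b) }

attribute [local instance] Rn.commRing

theorem Polynomial.monic_X_pow_sub_one {R : Type*} [Ring R] {n : ℕ} (hn : 0 < n) :
    (X ^ n - 1 : R[X]).Monic := by
  simpa using monic_X_pow_sub_C (1 : R) hn.ne'

theorem Polynomial.degree_X_pow_sub_one {R : Type*} [Ring R] [Nontrivial R] {n : ℕ} (hn : 0 < n) :
    (X ^ n - 1 : R[X]).degree = n := by
  simpa using degree_X_pow_sub_C hn (1 : R)

theorem Polynomial.Monic.eq_zero_of_dvd_of_degree_lt {R : Type*} [Semiring R] {f F : R[X]}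
    (hf : f.Monic) (hdvd : f ∣ F) (hF : F.degree < f.degree) : F = 0 := by
  by_contra hne
  exact hf.not_dvd_of_degree_lt hne hF hdvd

theorem Polynomial.Monic.dvd_of_mul_dvd_mul_left {R : Type*} [CommRing R] {f F G : R[X]}
    (hf : f.Monic) (h : f * F ∣ f * G) : F ∣ G := by
  obtain ⟨Q, hQ⟩ := h
  exact ⟨Q, hf.isRegular.left (show f * G = f * (F * Q) by rw [hQ, mul_assoc])⟩

theorem Polynomial.Monic.eq_zero_of_mk_eq_zero {R : Type*} [CommRing R] {f F : R[X]}
    (hf : f.Monic) (hF : F.degree < f.degree) (h : Ideal.Quotient.mk (Ideal.span {f}) F = 0) :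
    F = 0 :=
  hf.eq_zero_of_dvd_of_degree_lt
    (Ideal.mem_span_singleton.1 (Ideal.Quotient.eq_zero_iff_mem.1 h)) hF

theorem Polynomial.natCard_degreeLT (R : Type*) [Semiring R] (k : ℕ) :
    Nat.card (degreeLT R k) = Nat.card R ^ k := by
  rw [Nat.card_congr (degreeLTEquiv R k).toEquiv, Nat.card_fun, Nat.card_fin]

section Quotients

variable {p n : ℕ}

theorem uR_mul_self : uR p 2 * uR p 2 = 0 := by
  rw [← map_mul, Ideal.Quotient.eq_zero_iff_mem, ← sq]
  exact Ideal.subset_span rfl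

theorem uu_mul_self : uu p 2 n * uu p 2 n = 0 := by
  rw [← map_mul, ← C_mul, uR_mul_self, C_0, map_zero]

theorem Ru.exists_eq_algebraMap_add_mul_uR (z : Ru p 2) :
    ∃ a b : ZMod p,
      z = algebraMap (ZMod p) (Ru p 2) a + algebraMap (ZMod p) (Ru p 2) b * uR p 2 := by
  obtain ⟨f, rfl⟩ := Ideal.Quotient.mk_surjective z
  induction f using Polynomial.induction_on' with
  | add f₁ f₂ h₁ h₂ =>
    obtain ⟨a₁, b₁, h₁⟩ := h₁
    obtain ⟨a₂, b₂, h₂⟩ := h₂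
    exact ⟨a₁ + a₂, b₁ + b₂, by rw [map_add, h₁, h₂]; simp only [map_add]; ring⟩
  | monomial m c =>
    rw [← C_mul_X_pow_eq_monomial, map_mul, map_pow]
    match m with
    | 0 => exact ⟨c, 0, by simp; rfl⟩
    | 1 => exact ⟨0, c, by simp; rfl⟩
    | m + 2 =>
      refine ⟨0, 0, ?_⟩
      change _ * uR p 2 ^ (m + 2) = _
      rw [pow_add, sq (uR p 2), uR_mul_self]
      simp

instance Ru.nontrivial [Fact (1 < p)] : Nontrivial (Ru p 2) := by
  rw [Ideal.Quotient.nontrivial_iff, Ne, Ideal.span_singleton_eq_top]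
  intro hu
  simpa using hu.map (evalRingHom (0 : ZMod p))

theorem Ru.eq_zero_of_algebraMap_mul_uR_eq_zero [Fact (1 < p)] {b : ZMod p}
    (h : algebraMap (ZMod p) (Ru p 2) b * uR p 2 = 0) : b = 0 := by
  have hdeg : (C b * X).degree < ((X : (ZMod p)[X]) ^ 2).degree := by
    rw [degree_X_pow]
    exact (degree_C_mul_X_le b).trans_lt (by norm_num)
  simpa using congrArg (coeff · 1) ((monic_X_pow 2).eq_zero_of_mk_eq_zero hdeg h)

theorem smul_eq_algebraMap_mul (c : Ru p 2) (z : Rn p 2 n) :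
    c • z = algebraMap (Ru p 2) (Rn p 2 n) c * z :=
  Algebra.smul_def c z

theorem algebraMap_uR : algebraMap (Ru p 2) (Rn p 2 n) (uR p 2) = uu p 2 n := rfl

theorem algebraMap_algebraMap_eq_liftP_C (a : ZMod p) :
    algebraMap (Ru p 2) (Rn p 2 n) (algebraMap (ZMod p) (Ru p 2) a) = liftP p 2 n (C a) := by
  simp [liftP]
  rfl

theorem liftP_X (k : ℕ) : liftP p k n X = xx p k n := by
  simp [liftP]

theorem liftP_X_pow_sub_one (k : ℕ) : liftP p k n (X ^ n - 1) = 0 := by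
  simp only [liftP, RingHom.comp_apply, coe_mapRingHom, Polynomial.map_sub, Polynomial.map_pow,
    map_X, Polynomial.map_one, Ideal.Quotient.eq_zero_iff_mem]
  exact Ideal.subset_span rfl

theorem eq_zero_of_uu_mul_liftP_eq_zero [Fact (1 < p)] (hn : 0 < n) {F : (ZMod p)[X]}
    (hF : F.degree < n) (h : uu p 2 n * liftP p 2 n F = 0) : F = 0 := by
  set ι₀ := algebraMap (ZMod p) (Ru p 2)
  have hdeg : (C (uR p 2) * F.map ι₀).degree < ((X : (Ru p 2)[X]) ^ n - 1).degree := by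
    rw [degree_X_pow_sub_one hn, ← smul_eq_C_mul]
    exact (degree_smul_le _ _).trans_lt (degree_map_le.trans_lt hF)
  have h0 := (monic_X_pow_sub_one hn).eq_zero_of_mk_eq_zero hdeg (by simpa [liftP] using h)
  ext k
  exact Ru.eq_zero_of_algebraMap_mul_uR_eq_zero (by simpa [mul_comm] using congrArg (coeff · k) h0)

theorem dvd_of_uu_mul_liftP_eq_zero [Fact (1 < p)] (hn : 0 < n) {F : (ZMod p)[X]}
    (h : uu p 2 n * liftP p 2 n F = 0) : X ^ n - 1 ∣ F := by
  have hmonic : (X ^ n - 1 : (ZMod p)[X]).Monic := monic_X_pow_sub_one hn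
  have hdeg : (F %ₘ (X ^ n - 1)).degree < n :=
    degree_X_pow_sub_one (R := ZMod p) hn ▸ degree_modByMonic_lt F hmonic
  rw [← modByMonic_eq_zero_iff_dvd hmonic]
  refine eq_zero_of_uu_mul_liftP_eq_zero hn hdeg ?_
  rw [← h]
  conv_rhs => rw [← modByMonic_add_div F (X ^ n - 1)]
  rw [map_add, map_mul, liftP_X_pow_sub_one, zero_mul, add_zero]

theorem Rn.exists_eq_liftP_add_uu_mul (f : Rn p 2 n) :
    ∃ F F' : (ZMod p)[X], f = liftP p 2 n F + uu p 2 n * liftP p 2 n F' := by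
  obtain ⟨P, rfl⟩ := Ideal.Quotient.mk_surjective f
  induction P using Polynomial.induction_on' with
  | add P₁ P₂ h₁ h₂ =>
    obtain ⟨F₁, F₁', h₁⟩ := h₁
    obtain ⟨F₂, F₂', h₂⟩ := h₂
    exact ⟨F₁ + F₂, F₁' + F₂', by rw [map_add, h₁, h₂]; simp only [map_add]; ring⟩
  | monomial m c =>
    obtain ⟨a, b, rfl⟩ := Ru.exists_eq_algebraMap_add_mul_uR c
    refine ⟨C a * X ^ m, C b * X ^ m, ?_⟩
    rw [← C_mul_X_pow_eq_monomial, map_mul, map_pow]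
    change algebraMap (Ru p 2) (Rn p 2 n) _ * xx p 2 n ^ m = _
    simp only [map_add, map_mul, map_pow, algebraMap_algebraMap_eq_liftP_C, algebraMap_uR, liftP_X]
    ring

theorem liftP_degreeLTEquiv_symm_mul {k : ℕ} (α : Fin k → ZMod p) (w : Rn p 2 n) :
    liftP p 2 n ((degreeLTEquiv (ZMod p) k).symm α) * w =
      ∑ i, algebraMap (ZMod p) (Ru p 2) (α i) • (xx p 2 n ^ (i : ℕ) * w) := by
  change liftP p 2 n (∑ i : Fin k, monomial i (α i)) * w = _
  rw [map_sum, Finset.sum_mul]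
  refine Finset.sum_congr rfl fun i _ => ?_
  rw [smul_eq_algebraMap_mul, algebraMap_algebraMap_eq_liftP_C, ← C_mul_X_pow_eq_monomial, map_mul,
    map_pow, liftP_X, mul_assoc]

theorem liftP_mul_mem_of_degree_lt {k : ℕ} (M : Submodule (Ru p 2) (Rn p 2 n))
    {F : (ZMod p)[X]} (hF : F.degree < k) {w : Rn p 2 n} (hw : ∀ i < k, xx p 2 n ^ i * w ∈ M) :
    liftP p 2 n F * w ∈ M := by
  have hF' : F = (degreeLTEquiv (ZMod p) k).symm
      (degreeLTEquiv (ZMod p) k ⟨F, mem_degreeLT.2 hF⟩) := by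
    rw [LinearEquiv.symm_apply_apply]
  rw [hF', liftP_degreeLTEquiv_symm_mul]
  exact M.sum_mem fun i _ => M.smul_mem _ (hw i i.isLt)

end Quotients

section Code

variable {p n : ℕ} {g pp a b h s : (ZMod p)[X]}

def codeElem (n : ℕ) (g pp a A E D : (ZMod p)[X]) : Rn p 2 n :=
  liftP p 2 n A * (liftP p 2 n g + uu p 2 n * liftP p 2 n pp) +
    liftP p 2 n E * (uu p 2 n * (liftP p 2 n g + uu p 2 n * liftP p 2 n pp)) +
    liftP p 2 n D * (uu p 2 n * liftP p 2 n a)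

theorem codeElem_mem_span_pair (A E D : (ZMod p)[X]) :
    codeElem n g pp a A E D ∈
      Ideal.span {liftP p 2 n g + uu p 2 n * liftP p 2 n pp, uu p 2 n * liftP p 2 n a} :=
  Ideal.mem_span_pair.2
    ⟨liftP p 2 n A + uu p 2 n * liftP p 2 n E, liftP p 2 n D, by unfold codeElem; ring⟩

theorem codeElem_sub (A E D A' E' D' : (ZMod p)[X]) :
    codeElem n g pp a (A - A') (E - E') (D - D') =
      codeElem n g pp a A E D - codeElem n g pp a A' E' D' := by
  simp only [codeElem, map_sub]
  ring

theorem exists_codeElem_eq_of_mem_span_pair {z : Rn p 2 n}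
    (hz : z ∈ Ideal.span {liftP p 2 n g + uu p 2 n * liftP p 2 n pp, uu p 2 n * liftP p 2 n a}) :
    ∃ A E D, z = codeElem n g pp a A E D := by
  obtain ⟨f₁, f₂, rfl⟩ := Ideal.mem_span_pair.1 hz
  obtain ⟨F₁, F₁', rfl⟩ := Rn.exists_eq_liftP_add_uu_mul f₁
  obtain ⟨F₂, F₂', rfl⟩ := Rn.exists_eq_liftP_add_uu_mul f₂
  refine ⟨F₁, F₁', F₂, ?_⟩
  unfold codeElem
  linear_combination liftP p 2 n F₂' * liftP p 2 n a * uu_mul_self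

theorem liftP_mul_liftP_eq_zero (hgh : g * h = X ^ n - 1) :
    liftP p 2 n g * liftP p 2 n h = 0 := by
  rw [← map_mul, hgh, liftP_X_pow_sub_one]

theorem codeElem_modByMonic_left (hgh : g * h = X ^ n - 1) (hs : pp * h = a * s)
    (A E D : (ZMod p)[X]) :
    codeElem n g pp a A E D = codeElem n g pp a (A %ₘ h) E (D + A /ₘ h * s) := by
  have hs' : liftP p 2 n pp * liftP p 2 n h = liftP p 2 n a * liftP p 2 n s := by
    rw [← map_mul, ← map_mul, hs]
  conv_lhs => rw [← modByMonic_add_div A h]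
  simp only [codeElem, map_add, map_mul]
  linear_combination liftP p 2 n (A /ₘ h) * liftP_mul_liftP_eq_zero hgh +
    liftP p 2 n (A /ₘ h) * uu p 2 n * hs'

theorem codeElem_modByMonic_mid (hgh : g * h = X ^ n - 1) (A E D : (ZMod p)[X]) :
    codeElem n g pp a A E D = codeElem n g pp a A (E %ₘ h) D := by
  conv_lhs => rw [← modByMonic_add_div E h]
  simp only [codeElem, map_add, map_mul]
  linear_combination uu p 2 n * liftP p 2 n (E /ₘ h) * liftP_mul_liftP_eq_zero hgh +
    liftP p 2 n h * liftP p 2 n (E /ₘ h) * liftP p 2 n pp * uu_mul_self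

theorem codeElem_modByMonic_right (hab : g = a * b) (A E D : (ZMod p)[X]) :
    codeElem n g pp a A E D = codeElem n g pp a A (E + D /ₘ b) (D %ₘ b) := by
  conv_lhs => rw [← modByMonic_add_div D b]
  simp only [codeElem, map_add, map_mul, hab]
  linear_combination -(liftP p 2 n (D /ₘ b) * liftP p 2 n pp * uu_mul_self)

theorem mem_span_pair_iff_exists_codeElem [Fact (1 < p)] (hh : h.Monic) (hb : b.Monic)
    (hgh : g * h = X ^ n - 1) (hab : g = a * b) (hs : pp * h = a * s) {z : Rn p 2 n} :
    z ∈ Ideal.span {liftP p 2 n g + uu p 2 n * liftP p 2 n pp, uu p 2 n * liftP p 2 n a} ↔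
      ∃ A E D, A.degree < h.degree ∧ E.degree < h.degree ∧ D.degree < b.degree ∧
        z = codeElem n g pp a A E D := by
  refine ⟨fun hz => ?_, fun ⟨A, E, D, _, _, _, hz⟩ => hz ▸ codeElem_mem_span_pair A E D⟩
  obtain ⟨A, E, D, rfl⟩ := exists_codeElem_eq_of_mem_span_pair hz
  refine ⟨A %ₘ h, (E + (D + A /ₘ h * s) /ₘ b) %ₘ h, (D + A /ₘ h * s) %ₘ b,
    degree_modByMonic_lt _ hh, degree_modByMonic_lt _ hh, degree_modByMonic_lt _ hb, ?_⟩
  rw [codeElem_modByMonic_left hgh hs, codeElem_modByMonic_right hab, codeElem_modByMonic_mid hgh]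

theorem codeElem_eq_zero [Fact (1 < p)] (hn : 0 < n) (hg : g.Monic) (ha : a.Monic)
    (hb : b.Monic) (hh : h.Monic) (hgh : g * h = X ^ n - 1) (hab : g = a * b)
    {A E D : (ZMod p)[X]} (hA : A.degree < h.degree) (hE : E.degree < h.degree)
    (hD : D.degree < b.degree) (h0 : codeElem n g pp a A E D = 0) :
    A = 0 ∧ E = 0 ∧ D = 0 := by
  have hdvd : ∀ F, uu p 2 n * liftP p 2 n F = 0 → g * h ∣ F :=
    fun F hF => hgh ▸ dvd_of_uu_mul_liftP_eq_zero hn hF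
  have hA0 : A = 0 := by
    refine hh.eq_zero_of_dvd_of_degree_lt (hg.dvd_of_mul_dvd_mul_left (hdvd _ ?_)) hA
    rw [← mul_zero (uu p 2 n), ← h0]
    simp only [codeElem, map_mul]
    linear_combination (-(liftP p 2 n A * liftP p 2 n pp) - liftP p 2 n E * liftP p 2 n g -
      liftP p 2 n E * uu p 2 n * liftP p 2 n pp - liftP p 2 n D * liftP p 2 n a) * uu_mul_self
  subst hA0
  have hbh : b * h ∣ b * E + D := by
    refine ha.dvd_of_mul_dvd_mul_left ?_
    rw [← mul_assoc, ← hab]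
    refine hdvd _ ?_
    rw [← h0, hab]
    simp only [codeElem, map_mul, map_add, map_zero]
    linear_combination (-(liftP p 2 n E * liftP p 2 n pp)) * uu_mul_self
  have hD0 : D = 0 := hb.eq_zero_of_dvd_of_degree_lt
    ((dvd_add_right (dvd_mul_right b E)).1 ((dvd_mul_right b h).trans hbh)) hD
  subst hD0
  rw [add_zero] at hbh
  exact ⟨rfl, hh.eq_zero_of_dvd_of_degree_lt (hb.dvd_of_mul_dvd_mul_left hbh) hE, rfl⟩

theorem codeElem_mem {k₁ k₂ : ℕ} {M : Submodule (Ru p 2) (Rn p 2 n)}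
    (hG : ∀ i < k₁, xx p 2 n ^ i * (liftP p 2 n g + uu p 2 n * liftP p 2 n pp) ∈ M)
    (huA : ∀ j < k₂, xx p 2 n ^ j * (uu p 2 n * liftP p 2 n a) ∈ M)
    {A E D : (ZMod p)[X]} (hA : A.degree < k₁) (hE : E.degree < k₁) (hD : D.degree < k₂) :
    codeElem n g pp a A E D ∈ M := by
  set G := liftP p 2 n g + uu p 2 n * liftP p 2 n pp
  have huG : ∀ i < k₁, xx p 2 n ^ i * (uu p 2 n * G) ∈ M := by
    intro i hi
    rw [mul_left_comm, ← algebraMap_uR, ← smul_eq_algebraMap_mul]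
    exact M.smul_mem _ (hG i hi)
  exact add_mem (add_mem (liftP_mul_mem_of_degree_lt M hA hG)
    (liftP_mul_mem_of_degree_lt M hE huG)) (liftP_mul_mem_of_degree_lt M hD huA)

theorem span_eq_span_pair [Fact (1 < p)] (hh : h.Monic) (hb : b.Monic)
    (hgh : g * h = X ^ n - 1) (hab : g = a * b) (hs : pp * h = a * s) {k₁ k₂ : ℕ}
    (hk₁ : h.degree = k₁) (hk₂ : b.degree = k₂) :
    Submodule.span (Ru p 2)
        ({c | ∃ i < k₁, c = xx p 2 n ^ i * (liftP p 2 n g + uu p 2 n * liftP p 2 n pp)} ∪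
          {c | ∃ j < k₂, c = xx p 2 n ^ j * (uu p 2 n * liftP p 2 n a)}) =
      (Ideal.span {liftP p 2 n g + uu p 2 n * liftP p 2 n pp,
        uu p 2 n * liftP p 2 n a}).restrictScalars (Ru p 2) := by
  refine le_antisymm (Submodule.span_le.2 ?_) fun z hz => ?_
  · rintro z (⟨i, -, rfl⟩ | ⟨j, -, rfl⟩)
    · exact Ideal.mul_mem_left _ _ (Ideal.subset_span (Set.mem_insert _ _))
    · exact Ideal.mul_mem_left _ _ (Ideal.subset_span (Set.mem_insert_of_mem _ rfl))
  · obtain ⟨A, E, D, hA, hE, hD, rfl⟩ := (mem_span_pair_iff_exists_codeElem hh hb hgh hab hs).1 hz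
    exact codeElem_mem (fun i hi => Submodule.subset_span (Or.inl ⟨i, hi, rfl⟩))
      (fun j hj => Submodule.subset_span (Or.inr ⟨j, hj, rfl⟩)) (hk₁ ▸ hA) (hk₁ ▸ hE) (hk₂ ▸ hD)

theorem sum_smul_eq_codeElem {k₁ k₂ : ℕ} (α β : Fin k₁ → ZMod p) (δ ε : Fin k₂ → ZMod p) :
    ∑ i, (algebraMap (ZMod p) (Ru p 2) (α i) + algebraMap (ZMod p) (Ru p 2) (β i) * uR p 2) •
        (xx p 2 n ^ (i : ℕ) * (liftP p 2 n g + uu p 2 n * liftP p 2 n pp)) +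
      ∑ j, (algebraMap (ZMod p) (Ru p 2) (δ j) + algebraMap (ZMod p) (Ru p 2) (ε j) * uR p 2) •
        (xx p 2 n ^ (j : ℕ) * (uu p 2 n * liftP p 2 n a)) =
      codeElem n g pp a ((degreeLTEquiv _ k₁).symm α) ((degreeLTEquiv _ k₁).symm β)
        ((degreeLTEquiv _ k₂).symm δ) := by
  unfold codeElem
  set G := liftP p 2 n g + uu p 2 n * liftP p 2 n pp
  have huG : ∀ i : ℕ, uR p 2 • (xx p 2 n ^ i * G) = xx p 2 n ^ i * (uu p 2 n * G) := by
    intro i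
    rw [smul_eq_algebraMap_mul, algebraMap_uR]
    ring
  have huA : ∀ j : ℕ, uR p 2 • (xx p 2 n ^ j * (uu p 2 n * liftP p 2 n a)) = 0 := by
    intro j
    rw [smul_eq_algebraMap_mul, algebraMap_uR]
    linear_combination xx p 2 n ^ j * liftP p 2 n a * uu_mul_self
  rw [liftP_degreeLTEquiv_symm_mul, liftP_degreeLTEquiv_symm_mul, liftP_degreeLTEquiv_symm_mul]
  simp only [add_smul, mul_smul, huG, huA, smul_zero, add_zero, Finset.sum_add_distrib]

theorem eq_zero_of_sum_smul_eq_zero [Fact (1 < p)] (hn : 0 < n) (hg : g.Monic) (ha : a.Monic)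
    (hb : b.Monic) (hh : h.Monic) (hgh : g * h = X ^ n - 1) (hab : g = a * b) {k₁ k₂ : ℕ}
    (hk₁ : h.degree = k₁) (hk₂ : b.degree = k₂) (c : Fin k₁ → Ru p 2) (d : Fin k₂ → Ru p 2)
    (hsum : ∑ i, c i • (xx p 2 n ^ (i : ℕ) * (liftP p 2 n g + uu p 2 n * liftP p 2 n pp)) +
      ∑ j, d j • (xx p 2 n ^ (j : ℕ) * (uu p 2 n * liftP p 2 n a)) = 0) :
    (∀ i, c i = 0) ∧ ∀ j, d j • (uu p 2 n * liftP p 2 n a) = 0 := by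
  choose α β hc using fun i => Ru.exists_eq_algebraMap_add_mul_uR (c i)
  choose δ ε hd using fun j => Ru.exists_eq_algebraMap_add_mul_uR (d j)
  have hdeg : ∀ {k} (v : Fin k → ZMod p), ((degreeLTEquiv _ k).symm v : (ZMod p)[X]).degree < k :=
    fun v => mem_degreeLT.1 ((degreeLTEquiv _ _).symm v).2
  have hinj : ∀ {k} {v : Fin k → ZMod p}, ((degreeLTEquiv _ k).symm v : (ZMod p)[X]) = 0 → v = 0 :=
    fun hv => (LinearEquiv.map_eq_zero_iff _).1 (Submodule.coe_eq_zero.1 hv)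
  obtain ⟨hα, hβ, hδ⟩ := codeElem_eq_zero hn hg ha hb hh hgh hab (hk₁ ▸ hdeg α) (hk₁ ▸ hdeg β)
    (hk₂ ▸ hdeg δ) (by rw [← sum_smul_eq_codeElem (pp := pp) α β δ ε, ← hsum]; simp only [hc, hd])
  obtain rfl := hinj hα
  obtain rfl := hinj hβ
  obtain rfl := hinj hδ
  refine ⟨fun i => by simp [hc], fun j => ?_⟩
  rw [hd j, Pi.zero_apply, map_zero, zero_add, smul_eq_algebraMap_mul, map_mul, algebraMap_uR]
  linear_combination algebraMap (Ru p 2) (Rn p 2 n) (algebraMap (ZMod p) (Ru p 2) (ε j)) *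
    liftP p 2 n a * uu_mul_self

theorem natCard_span_pair [Fact (1 < p)] (hn : 0 < n) (hg : g.Monic) (ha : a.Monic)
    (hb : b.Monic) (hh : h.Monic) (hgh : g * h = X ^ n - 1) (hab : g = a * b)
    (hs : pp * h = a * s) {k₁ k₂ : ℕ} (hk₁ : h.degree = k₁) (hk₂ : b.degree = k₂) :
    Nat.card (Ideal.span {liftP p 2 n g + uu p 2 n * liftP p 2 n pp,
      uu p 2 n * liftP p 2 n a}) = p ^ (k₁ + k₁ + k₂) := by
  let Φ : degreeLT (ZMod p) k₁ × degreeLT (ZMod p) k₁ × degreeLT (ZMod p) k₂ →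
      Ideal.span {liftP p 2 n g + uu p 2 n * liftP p 2 n pp, uu p 2 n * liftP p 2 n a} :=
    fun v => ⟨codeElem n g pp a v.1 v.2.1 v.2.2, codeElem_mem_span_pair _ _ _⟩
  have hΦ : Function.Bijective Φ := by
    refine ⟨fun v w hvw => ?_, fun ⟨z, hz⟩ => ?_⟩
    · have h0 : codeElem n g pp a ↑(v.1 - w.1) ↑(v.2.1 - w.2.1) ↑(v.2.2 - w.2.2) = 0 := by
        rw [Submodule.coe_sub, Submodule.coe_sub, Submodule.coe_sub, codeElem_sub, sub_eq_zero]
        exact congrArg Subtype.val hvw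
      obtain ⟨h₁, h₂, h₃⟩ := codeElem_eq_zero hn hg ha hb hh hgh hab
        (hk₁ ▸ mem_degreeLT.1 (v.1 - w.1).2) (hk₁ ▸ mem_degreeLT.1 (v.2.1 - w.2.1).2)
        (hk₂ ▸ mem_degreeLT.1 (v.2.2 - w.2.2).2) h0
      simp only [ZeroMemClass.coe_eq_zero, sub_eq_zero] at h₁ h₂ h₃
      exact Prod.ext h₁ (Prod.ext h₂ h₃)
    · obtain ⟨A, E, D, hA, hE, hD, rfl⟩ := (mem_span_pair_iff_exists_codeElem hh hb hgh hab hs).1 hz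
      exact ⟨(⟨A, mem_degreeLT.2 (hk₁ ▸ hA)⟩, ⟨E, mem_degreeLT.2 (hk₁ ▸ hE)⟩,
        ⟨D, mem_degreeLT.2 (hk₂ ▸ hD)⟩), rfl⟩
  rw [← Nat.card_congr (Equiv.ofBijective Φ hΦ), Nat.card_prod, Nat.card_prod, natCard_degreeLT,
    natCard_degreeLT, Nat.card_zmod]
  ring

end Code

end

theorem stmt5_general (p n r t : ℕ) (hp : p.Prime) (hn : 0 < n)
    (g pp a h : Polynomial (ZMod p)) (Ck : Ideal (Rn p 2 n))
    (hmg : g.Monic) (hma : a.Monic) (hdg : g.natDegree = r) (hda : a.natDegree = t)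
    (hag : a ∣ g) (hgh : g * h = (X : Polynomial (ZMod p)) ^ n - 1)
    (hap : a ∣ pp * h)
    (hC : Ck = Ideal.span {liftP p 2 n g + uu p 2 n * liftP p 2 n pp,
      uu p 2 n * liftP p 2 n a}) :
    Submodule.span (Ru p 2)
        ({c | ∃ i < n - r, c = xx p 2 n ^ i * (liftP p 2 n g + uu p 2 n * liftP p 2 n pp)} ∪
         {c | ∃ j < r - t, c = xx p 2 n ^ j * (uu p 2 n * liftP p 2 n a)} : Set (Rn p 2 n)) =
      Ck.restrictScalars (Ru p 2) ∧
    (∀ (c : Fin (n - r) → Ru p 2) (d : Fin (r - t) → Ru p 2),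
      (∑ i, c i • (xx p 2 n ^ (i : ℕ) * (liftP p 2 n g + uu p 2 n * liftP p 2 n pp)) +
       ∑ j, d j • (xx p 2 n ^ (j : ℕ) * (uu p 2 n * liftP p 2 n a))) = 0 →
      (∀ i, c i • (liftP p 2 n g + uu p 2 n * liftP p 2 n pp) = 0) ∧
      (∀ j, d j • (uu p 2 n * liftP p 2 n a) = 0)) ∧
    Nat.card Ck = p ^ (2 * n - r - t) := by
  have : Fact (1 < p) := ⟨hp.one_lt⟩
  obtain ⟨b, hab⟩ := hag
  obtain ⟨s, hs⟩ := hap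
  have hh : h.Monic := hmg.of_mul_monic_left (hgh ▸ monic_X_pow_sub_one hn)
  have hb : b.Monic := hma.of_mul_monic_left (hab ▸ hmg)
  have hrh : r + h.natDegree = n := by
    have := congrArg natDegree hgh
    rwa [hmg.natDegree_mul hh, ← C_1, natDegree_X_pow_sub_C, hdg] at this
  have htb : t + b.natDegree = r := by
    have := congrArg natDegree hab
    rwa [hma.natDegree_mul hb, hda, hdg, eq_comm] at this
  have hdh : h.degree = (n - r : ℕ) := by
    rw [degree_eq_natDegree hh.ne_zero]
    norm_cast
    omega
  have hdb : b.degree = (r - t : ℕ) := by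
    rw [degree_eq_natDegree hb.ne_zero]
    norm_cast
    omega
  subst hC
  refine ⟨span_eq_span_pair hh hb hgh hab hs hdh hdb, fun c d hsum => ?_, ?_⟩
  · obtain ⟨hc, hd⟩ := eq_zero_of_sum_smul_eq_zero hn hmg hma hb hh hgh hab hdh hdb c d hsum
    exact ⟨fun i => by rw [hc i, smul_eq_algebraMap_mul, map_zero, zero_mul], hd⟩
  · rw [natCard_span_pair hn hmg hma hb hh hgh hab hs hdh hdb]
    congr 1
    omega

/-- Over `R_2 = Z_p[u]/(u^2)`, let `C = <g(x) + u p(x), u a(x)>` with `g, a`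
monic, `deg g = r`, `deg a = t ≤ r`, `a ∣ g ∣ x^n - 1` mod `p` and
`a ∣ p(x) (x^n - 1)/g(x)` mod `p` (phrased via `h` with `g h = x^n - 1`).  Then
`B = {x^i (g + u p) : i < n - r} ∪ {x^j (u a) : j < r - t}` is a minimal spanning set of `C`
as an `R_2`-module (it spans, and in any `R_2`-linear combination equal to zero each
coefficient annihilates its generator), and `|C| = p^{2n - r - t}`. -/
theorem stmt5 (p n r t : ℕ) (hp : p.Prime) (hn : 0 < n)
    (g pp a h : Polynomial (ZMod p)) (Ck : Ideal (Rn p 2 n))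
    (hmg : g.Monic) (hma : a.Monic) (hdg : g.natDegree = r) (hda : a.natDegree = t)
    (htr : t ≤ r) (hag : a ∣ g) (hgh : g * h = (X : Polynomial (ZMod p)) ^ n - 1)
    (hap : a ∣ pp * h)
    (hC : Ck = Ideal.span {liftP p 2 n g + uu p 2 n * liftP p 2 n pp,
      uu p 2 n * liftP p 2 n a}) :
    Submodule.span (Ru p 2)
        ({c | ∃ i < n - r, c = xx p 2 n ^ i * (liftP p 2 n g + uu p 2 n * liftP p 2 n pp)} ∪
         {c | ∃ j < r - t, c = xx p 2 n ^ j * (uu p 2 n * liftP p 2 n a)} : Set (Rn p 2 n)) =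
      Ck.restrictScalars (Ru p 2) ∧
    (∀ (c : Fin (n - r) → Ru p 2) (d : Fin (r - t) → Ru p 2),
      (∑ i, c i • (xx p 2 n ^ (i : ℕ) * (liftP p 2 n g + uu p 2 n * liftP p 2 n pp)) +
       ∑ j, d j • (xx p 2 n ^ (j : ℕ) * (uu p 2 n * liftP p 2 n a))) = 0 →
      (∀ i, c i • (liftP p 2 n g + uu p 2 n * liftP p 2 n pp) = 0) ∧
      (∀ j, d j • (uu p 2 n * liftP p 2 n a) = 0)) ∧
    Nat.card Ck = p ^ (2 * n - r - t) :=
  stmt5_general p n r t hp hn g pp a h Ck hmg hma hdg hda hag hgh hap hC
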